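/- Suppose (A_i) is an increasing sequence of subsets of ℕ each having asymptotic density, such that ν(A_i) converges to L, and suppose A ⊆ ℕ satisfies ν⁺(A_i △ A ∩ (A_i ∪ A)) → 0, i.e., d(A_i, A) → 0 where d(A,B) = ν⁺(A △ B). Then A has asymptotic density and ν(A) = L. -/

import Mathlib

open Filter
open scoped symmDiff Classical

noncomputable def densSeq (A : Set ℕ) (n : ℕ) : ℝ :=
  ((Finset.range n).filter (· ∈ A)).card / (n : ℝ)

noncomputable def nuPlus (A : Set ℕ) : ℝ :=
  Filter.atTop.limsup (densSeq A)

noncomputable def nuMinus (A : Set ℕ) : ℝ :=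
  Filter.atTop.liminf (densSeq A)

/-! Counting `B ⊆ A ∪ (A ∆ B)` and `A ⊆ (A ∆ B) ∪ B` inside `{0, …, n-1}` gives
`ν⁻(A) - ν⁺(A ∆ B) ≤ ν⁻(B) ≤ ν⁺(B) ≤ ν⁺(A) + ν⁺(A ∆ B)`. Applied to `A i`, the outer bounds are
`ν i ∓ ν⁺(A i ∆ B)`, and both tend to `L`. -/

lemma densSeq_nonneg (A : Set ℕ) (n : ℕ) : 0 ≤ densSeq A n := by
  unfold densSeq; positivity

lemma densSeq_le_one (A : Set ℕ) (n : ℕ) : densSeq A n ≤ 1 := by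
  unfold densSeq
  rcases Nat.eq_zero_or_pos n with rfl | hn
  · simp
  · rw [div_le_one (by exact_mod_cast hn)]
    exact_mod_cast (Finset.card_filter_le _ _).trans_eq (Finset.card_range n)

lemma densSeq_mono {A B : Set ℕ} (h : A ⊆ B) (n : ℕ) : densSeq A n ≤ densSeq B n := by
  unfold densSeq
  gcongr

lemma densSeq_union_le (A B : Set ℕ) (n : ℕ) :
    densSeq (A ∪ B) n ≤ densSeq A n + densSeq B n := by
  unfold densSeq
  rw [← add_div]
  gcongr
  simp only [Set.mem_union, Finset.filter_or]
  exact_mod_cast Finset.card_union_le _ _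

lemma densSeq_le_add_symmDiff (A B : Set ℕ) (n : ℕ) :
    densSeq B n ≤ densSeq A n + densSeq (A ∆ B) n := calc
  densSeq B n ≤ densSeq (A ∪ A ∆ B) n := by
    rw [Set.union_comm]; exact densSeq_mono (le_symmDiff_sup_left A B) n
  _ ≤ densSeq A n + densSeq (A ∆ B) n := densSeq_union_le A (A ∆ B) n

lemma isBoundedUnder_le_densSeq (A : Set ℕ) : IsBoundedUnder (· ≤ ·) atTop (densSeq A) :=
  isBoundedUnder_of ⟨1, densSeq_le_one A⟩

lemma isBoundedUnder_ge_densSeq (A : Set ℕ) : IsBoundedUnder (· ≥ ·) atTop (densSeq A) :=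
  isBoundedUnder_of ⟨0, densSeq_nonneg A⟩

lemma nuPlus_le_add_symmDiff (A B : Set ℕ) : nuPlus B ≤ nuPlus A + nuPlus (A ∆ B) :=
  (limsup_le_limsup (Eventually.of_forall (densSeq_le_add_symmDiff A B))
      (isBoundedUnder_ge_densSeq B).isCoboundedUnder_le
      (isBoundedUnder_le_add (isBoundedUnder_le_densSeq A) (isBoundedUnder_le_densSeq _))).trans
    (limsup_add_le (isBoundedUnder_ge_densSeq A) (isBoundedUnder_le_densSeq A)
      (isBoundedUnder_ge_densSeq _).isCoboundedUnder_le (isBoundedUnder_le_densSeq _))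

lemma nuMinus_le_add_symmDiff (A B : Set ℕ) : nuMinus A ≤ nuPlus (A ∆ B) + nuMinus B := by
  have h : ∀ n, densSeq A n ≤ densSeq (A ∆ B) n + densSeq B n := fun n => by
    rw [add_comm, symmDiff_comm]; exact densSeq_le_add_symmDiff B A n
  exact (liminf_le_liminf (Eventually.of_forall h) (isBoundedUnder_ge_densSeq A)
      (isBoundedUnder_le_add (isBoundedUnder_le_densSeq _)
        (isBoundedUnder_le_densSeq B)).isCoboundedUnder_ge).trans
    (liminf_add_le (isBoundedUnder_ge_densSeq _) (isBoundedUnder_le_densSeq _)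
      (isBoundedUnder_ge_densSeq B) (isBoundedUnder_le_densSeq B).isCoboundedUnder_ge)

theorem density_of_limit_general (A : ℕ → Set ℕ) (B : Set ℕ) (ν : ℕ → ℝ) (L : ℝ)
    (hdens : ∀ i, Tendsto (densSeq (A i)) atTop (nhds (ν i)))
    (hν : Tendsto ν atTop (nhds L))
    (hlim : Tendsto (fun i => nuPlus (A i ∆ B)) atTop (nhds 0)) :
    Tendsto (densSeq B) atTop (nhds L) := by
  have hupper : ∀ i, nuPlus B ≤ ν i + nuPlus (A i ∆ B) := fun i => by
    simpa only [nuPlus, (hdens i).limsup_eq] using nuPlus_le_add_symmDiff (A i) B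
  have hlower : ∀ i, ν i - nuPlus (A i ∆ B) ≤ nuMinus B := fun i => by
    have := nuMinus_le_add_symmDiff (A i) B
    rw [nuMinus, (hdens i).liminf_eq] at this
    linarith
  have hlimsup : nuPlus B ≤ L :=
    ge_of_tendsto (by simpa using hν.add hlim) (Eventually.of_forall hupper)
  have hliminf : L ≤ nuMinus B :=
    le_of_tendsto (by simpa using hν.sub hlim) (Eventually.of_forall hlower)
  exact tendsto_of_le_liminf_of_limsup_le hliminf hlimsup
    (isBoundedUnder_le_densSeq B) (isBoundedUnder_ge_densSeq B)

theorem density_of_limit (A : ℕ → Set ℕ) (B : Set ℕ) (ν : ℕ → ℝ) (L : ℝ)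
    (hmono : Monotone A)
    (hdens : ∀ i, Tendsto (densSeq (A i)) atTop (nhds (ν i)))
    (hν : Tendsto ν atTop (nhds L))
    (hlim : Tendsto (fun i => nuPlus (A i ∆ B)) atTop (nhds 0)) :
    Tendsto (densSeq B) atTop (nhds L) :=
  density_of_limit_general A B ν L hdens hν hlim
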